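/- arXiv:2410.22548 — 9 statements merged into one kernel-verified Lean document; each statement's English description precedes it below -/
import Mathlib

section
/- For every w ∈ S_n, the transposition shuffle T satisfies T^{n-1}(w)(1) = 1. Moreover, if n ≥ 2, there exists w ∈ S_n with T^{n-2}(w)(1) ≠ 1. Consequently, the termination number of T (the smallest m ∈ ℕ such that T^m(w)(1) = 1 for all w ∈ S_n) equals n - 1. -/
/-- `w ∈ S_n`: a permutation of `{1,…,n}`, encoded as a permutation of `ℕ`
that fixes every point outside `[1,n]`. -/
def IsPermOn (n : ℕ) (w : Equiv.Perm ℕ) : Prop :=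
  ∀ i : ℕ, i ∉ Finset.Icc 1 n → w i = i

/-- The transposition shuffle `T : w ↦ w · t_{1,k}` where `k := w 1`
(and `t_{1,1}` is the identity). -/
def Tshuffle : Equiv.Perm ℕ → Equiv.Perm ℕ := fun w => w * Equiv.swap 1 (w 1)

lemma Tshuffle_fixed {w : Equiv.Perm ℕ} (h : w 1 = 1) : Tshuffle w = w := by
  simp [Tshuffle, h]; rfl

lemma Tshuffle_iter_fixed {w : Equiv.Perm ℕ} (h : w 1 = 1) (m : ℕ) :
    Tshuffle^[m] w = w := by
  induction m with
  | zero => rfl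
  | succ m ih => rw [Function.iterate_succ_apply, Tshuffle_fixed h, ih]

lemma Tshuffle_mono {w : Equiv.Perm ℕ} {a b : ℕ} (hab : a ≤ b)
    (h : (Tshuffle^[a] w) 1 = 1) : (Tshuffle^[b] w) 1 = 1 := by
  obtain ⟨c, rfl⟩ := Nat.exists_eq_add_of_le hab
  rw [Nat.add_comm, Function.iterate_add_apply, Tshuffle_iter_fixed h, h]

/-- Lemma B: powers of `Tshuffle w` at 1 track powers of `w`, as long as the
orbit of 1 hasn't closed. -/
lemma pow_Tshuffle (w : Equiv.Perm ℕ) (j : ℕ) (hj : 1 ≤ j)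
    (h : ∀ i, 1 ≤ i → i ≤ j → (w ^ i) 1 ≠ 1) :
    ((Tshuffle w) ^ j) 1 = (w ^ (j + 1)) 1 := by
  induction j, hj using Nat.le_induction with
  | base =>
    have : (Tshuffle w) 1 = w (w 1) := by
      simp [Tshuffle, Equiv.Perm.mul_apply]
    simpa [pow_succ, pow_one, Equiv.Perm.mul_apply] using this
  | succ j hj ih =>
    have ih' := ih (fun i h1 h2 => h i h1 (by omega))
    have hne1 : (w ^ (j + 1)) 1 ≠ 1 := h (j + 1) (by omega) le_rfl
    have hnek : (w ^ (j + 1)) 1 ≠ w 1 := by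
      intro hc
      have hj1 : w ((w ^ j) 1) = w 1 := by
        rw [← Equiv.Perm.mul_apply, ← pow_succ']; exact hc
      exact h j hj (by omega) (w.injective hj1)
    have step : (Tshuffle w) ((w ^ (j + 1)) 1) = w ((w ^ (j + 1)) 1) := by
      simp [Tshuffle, Equiv.Perm.mul_apply, Equiv.swap_apply_of_ne_of_ne hne1 hnek]
    calc ((Tshuffle w) ^ (j + 1)) 1 = (Tshuffle w) (((Tshuffle w) ^ j) 1) := by
          rw [pow_succ', Equiv.Perm.mul_apply]
      _ = w ((w ^ (j + 1)) 1) := by rw [ih', step]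
      _ = (w ^ (j + 1 + 1)) 1 := by simp [pow_succ', Equiv.Perm.mul_apply]

/-- Lemma A: iterates of the shuffle track powers of `w` at 1, as long as the
orbit of 1 hasn't closed. -/
lemma iter_Tshuffle (m : ℕ) : ∀ (w : Equiv.Perm ℕ),
    (∀ i, 1 ≤ i → i ≤ m → (w ^ i) 1 ≠ 1) →
    (Tshuffle^[m] w) 1 = (w ^ (m + 1)) 1 := by
  induction m with
  | zero => intro w _; simp
  | succ m ih =>
    intro w h
    rw [Function.iterate_succ_apply]
    have hTw : ∀ i, 1 ≤ i → i ≤ m → ((Tshuffle w) ^ i) 1 ≠ 1 := by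
      intro i h1 h2
      rw [pow_Tshuffle w i h1 (fun i' h1' h2' => h i' h1' (by omega))]
      exact h (i + 1) (by omega) (by omega)
    rw [ih (Tshuffle w) hTw]
    exact pow_Tshuffle w (m + 1) (by omega) h

/-- The orbit of 1 under a permutation of `{1,…,n}` closes within `n` steps. -/
lemma orbit_closes {n : ℕ} (hn : 1 ≤ n) {w : Equiv.Perm ℕ} (hw : IsPermOn n w) :
    ∃ j, 1 ≤ j ∧ j ≤ n ∧ (w ^ j) 1 = 1 := by
  have hmaps : ∀ x ∈ Finset.Icc 1 n, w x ∈ Finset.Icc 1 n := by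
    intro x hx
    by_contra hwx
    rw [w.injective (hw _ hwx)] at hwx
    exact hwx hx
  have hpow : ∀ j : ℕ, (w ^ j) 1 ∈ Finset.Icc 1 n := by
    intro j
    induction j with
    | zero => simpa using hn
    | succ j ih => rw [pow_succ', Equiv.Perm.mul_apply]; exact hmaps _ ih
  have hcard : (Finset.Icc 1 n).card < (Finset.range (n + 1)).card := by
    simp
  obtain ⟨a, _, b, _, hab, heq⟩ :=
    Finset.exists_ne_map_eq_of_card_lt_of_maps_to hcard (fun j _ => hpow j)
  wlog hlt : a < b generalizing a b
  · exact this b ‹_› a ‹_› hab.symm heq.symm (by omega)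
  refine ⟨b - a, by omega, by
      have := Finset.mem_range.mp ‹b ∈ Finset.range (n + 1)›; omega, ?_⟩
  have key : (w ^ a) ((w ^ (b - a)) 1) = (w ^ a) 1 := by
    rw [← Equiv.Perm.mul_apply, ← pow_add]
    have hab' : a + (b - a) = b := by omega
    rw [hab', ← heq]
  exact (w ^ a).injective key

/-- The standard `n`-cycle `1 → 2 → ⋯ → n → 1` as a permutation of `ℕ`. -/
def cycleList (n : ℕ) : List ℕ := (List.range n).map (· + 1)

lemma cycleList_nodup (n : ℕ) : (cycleList n).Nodup :=
  (List.nodup_range : (List.range n).Nodup).map (fun a b => by omega)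

lemma mem_cycleList {n x : ℕ} : x ∈ cycleList n ↔ 1 ≤ x ∧ x ≤ n := by
  simp only [cycleList, List.mem_map, List.mem_range]
  constructor
  · rintro ⟨a, ha, rfl⟩; omega
  · rintro ⟨h1, h2⟩; exact ⟨x - 1, by omega, by omega⟩

lemma cycle_isPermOn (n : ℕ) : IsPermOn n (cycleList n).formPerm := by
  intro i hi
  apply List.formPerm_apply_of_notMem
  rw [mem_cycleList]
  simpa [Finset.mem_Icc] using hi

lemma cycle_pow_one {n : ℕ} (hn : 1 ≤ n) (j : ℕ) :
    (((cycleList n).formPerm ^ j) 1) = j % n + 1 := by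
  have hlen : (cycleList n).length = n := by simp [cycleList]
  have h0 : 0 < (cycleList n).length := by omega
  have h1 : (cycleList n)[0] = 1 := by simp [cycleList, h0]
  have := List.formPerm_pow_apply_getElem (cycleList n) (cycleList_nodup n) j 0 h0
  rw [h1] at this
  rw [this]
  have hjn : (0 + j) % (cycleList n).length < n := by
    rw [hlen]; exact Nat.mod_lt _ (by omega)
  simp [cycleList, hlen]

theorem stmt_2 (n : ℕ) :
    (∀ w : Equiv.Perm ℕ, IsPermOn n w → (Tshuffle^[n - 1] w) 1 = 1) ∧
    (2 ≤ n → ∃ w : Equiv.Perm ℕ, IsPermOn n w ∧ (Tshuffle^[n - 2] w) 1 ≠ 1) ∧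
    sInf {m : ℕ | ∀ w : Equiv.Perm ℕ, IsPermOn n w → (Tshuffle^[m] w) 1 = 1}
      = n - 1 := by
  rcases Nat.lt_or_ge n 2 with hn | hn
  · -- small cases `n = 0, 1`: every permutation on `[1,n]` fixes `1`
    have hfix : ∀ w : Equiv.Perm ℕ, IsPermOn n w → w 1 = 1 := by
      intro w hw
      by_contra h1
      rcases Nat.lt_or_ge n 1 with hn0 | hn1
      · exact h1 (hw 1 (by simp [Finset.mem_Icc]; omega))
      · have hne : w 1 ∉ Finset.Icc 1 n := by
          simp only [Finset.mem_Icc]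
          intro ⟨ha, hb⟩
          exact h1 (by omega)
        exact h1 (w.injective (hw _ hne))
    refine ⟨fun w hw => Tshuffle_mono (Nat.zero_le _) (hfix w hw), fun h => by omega, ?_⟩
    have h0 : (0 : ℕ) ∈ {m : ℕ | ∀ w : Equiv.Perm ℕ, IsPermOn n w → (Tshuffle^[m] w) 1 = 1} :=
      fun w hw => hfix w hw
    rw [Nat.sInf_eq_zero.mpr (Or.inl h0)]
    omega
  · -- main case `n ≥ 2`
    have part1 : ∀ w : Equiv.Perm ℕ, IsPermOn n w → (Tshuffle^[n - 1] w) 1 = 1 := by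
      intro w hw
      obtain ⟨j, hj1, hjn, hj⟩ := orbit_closes (by omega) hw
      have hP : ∃ j, 1 ≤ j ∧ (w ^ j) 1 = 1 := ⟨j, hj1, hj⟩
      have hspec := Nat.find_spec hP
      have hmin : ∀ i, 1 ≤ i → i ≤ Nat.find hP - 1 → (w ^ i) 1 ≠ 1 := by
        intro i h1 h2 hc
        exact Nat.find_min hP (by omega) ⟨h1, hc⟩
      have hle : Nat.find hP ≤ n := le_trans (Nat.find_min' hP ⟨hj1, hj⟩) hjn
      have := iter_Tshuffle (Nat.find hP - 1) w hmin
      rw [show Nat.find hP - 1 + 1 = Nat.find hP by omega, hspec.2] at this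
      exact Tshuffle_mono (by omega) this
    have hcyc : ∀ i, 1 ≤ i → i ≤ n - 1 → (((cycleList n).formPerm ^ i) 1) ≠ 1 := by
      intro i h1 h2
      rw [cycle_pow_one (by omega)]
      have : i % n = i := Nat.mod_eq_of_lt (by omega)
      omega
    have part2 : ∀ m, m ≤ n - 2 → (Tshuffle^[m] (cycleList n).formPerm) 1 ≠ 1 := by
      intro m hm
      rw [iter_Tshuffle m _ (fun i hi1 hi2 => hcyc i hi1 (by omega))]
      exact hcyc (m + 1) (by omega) (by omega)
    refine ⟨part1, fun _ => ⟨(cycleList n).formPerm, cycle_isPermOn n, part2 _ le_rfl⟩, ?_⟩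
    have hmem : n - 1 ∈ {m : ℕ | ∀ w : Equiv.Perm ℕ, IsPermOn n w → (Tshuffle^[m] w) 1 = 1} :=
      part1
    apply le_antisymm
    · exact Nat.sInf_le hmem
    · apply le_csInf ⟨n - 1, hmem⟩
      intro m hm
      by_contra hlt
      exact part2 m (by omega) (hm (cycleList n).formPerm (cycle_isPermOn n))
end

section
/- Let f be a homing shuffle on S_n and let w ∈ S_n be a permutation with w(1) ≠ 1. Then W(f(w)) > W(w); in fact W(f(w)) ≥ W(w) + 1. -/
/-- A homing shuffle on `S_n`: a map `f : S_n → S_n` such that for every `w ∈ S_n`,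
setting `k := w 1`, we have `f w k = k` and `f w i = w i` for all `i > k`. -/
def IsHomingShuffle (n : ℕ) (f : Equiv.Perm ℕ → Equiv.Perm ℕ) : Prop :=
  ∀ w : Equiv.Perm ℕ, IsPermOn n w →
    IsPermOn n (f w) ∧ f w (w 1) = w 1 ∧ ∀ i : ℕ, w 1 < i → f w i = w i

/-- The Wilf number `W(w) = ∑_{i ∈ [n], w(i) = i} 2^{i-2} ∈ ℚ`. -/
def wilf (n : ℕ) (w : Equiv.Perm ℕ) : ℚ :=
  ∑ i ∈ (Finset.Icc 1 n).filter (fun i => w i = i), (2 : ℚ) ^ ((i : ℤ) - 2)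

lemma geom_aux (m : ℕ) (hm : 1 ≤ m) :
    ∑ i ∈ Finset.Icc 2 m, (2:ℚ) ^ ((i:ℤ) - 2) = 2 ^ ((m:ℤ) - 1) - 1 := by
  induction m, hm using Nat.le_induction with
  | base => simp
  | succ m hm ih =>
    rw [Finset.sum_Icc_succ_top (by omega), ih]
    push_cast
    rw [show ((m:ℤ)+1-1) = (m:ℤ) - 1 + 1 by ring, show ((m:ℤ)+1-2) = (m:ℤ)-1 by ring,
      zpow_add_one₀ (by norm_num)]
    ring

theorem stmt_4 (n : ℕ) (f : Equiv.Perm ℕ → Equiv.Perm ℕ)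
    (hf : IsHomingShuffle n f) (w : Equiv.Perm ℕ) (hw : IsPermOn n w)
    (h1 : w 1 ≠ 1) :
    wilf n (f w) > wilf n w ∧ wilf n (f w) ≥ wilf n w + 1 := by
  set k := w 1 with hk
  have hkmem : k ∈ Finset.Icc 1 n := by
    by_contra h
    exact h1 (w.injective (hw k h))
  have hk2 : 2 ≤ k := by
    have := (Finset.mem_Icc.mp hkmem).1
    omega
  obtain ⟨hperm, hfix, habove⟩ := hf w hw
  set S := (Finset.Icc 1 n).filter (fun i => w i = i) with hS
  set G := (Finset.Icc 1 n).filter (fun i => f w i = i) with hG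
  have hSk : k ∉ S := by
    intro h
    have h2 := (Finset.mem_filter.mp h).2
    have : (1:ℕ) = k := w.injective (by rw [h2, ← hk])
    omega
  set T := S.filter (fun i => ¬ i < k) with hT
  set L := S.filter (fun i => i < k) with hL
  have hsplit : wilf n w = ∑ i ∈ L, (2:ℚ) ^ ((i:ℤ) - 2) + ∑ i ∈ T, (2:ℚ) ^ ((i:ℤ) - 2) := by
    rw [wilf, ← hS, ← Finset.sum_filter_add_sum_filter_not S (fun i => i < k)]
  have hkT : k ∉ T := fun h => hSk (Finset.mem_filter.mp h).1
  have hsub : insert k T ⊆ G := by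
    intro i hi
    rcases Finset.mem_insert.mp hi with rfl | hi
    · exact Finset.mem_filter.mpr ⟨hkmem, hfix⟩
    · obtain ⟨hiS, hik⟩ := Finset.mem_filter.mp hi
      obtain ⟨hiIcc, hifix⟩ := Finset.mem_filter.mp hiS
      have hik' : k < i := by
        rcases lt_or_eq_of_le (not_lt.mp hik) with h | h
        · exact h
        · exact absurd (h ▸ hiS) hSk
      exact Finset.mem_filter.mpr ⟨hiIcc, by rw [habove i hik', hifix]⟩
  have hpos : ∀ i ∈ G, (0:ℚ) ≤ (2:ℚ) ^ ((i:ℤ) - 2) := fun i _ => le_of_lt (by positivity)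
  have hstep1 : wilf n (f w) ≥ (2:ℚ) ^ ((k:ℤ) - 2) + ∑ i ∈ T, (2:ℚ) ^ ((i:ℤ) - 2) := by
    rw [wilf, ← hG]
    calc ∑ i ∈ G, (2:ℚ) ^ ((i:ℤ) - 2)
        ≥ ∑ i ∈ insert k T, (2:ℚ) ^ ((i:ℤ) - 2) :=
          Finset.sum_le_sum_of_subset_of_nonneg hsub (fun i hi _ => hpos i hi)
      _ = (2:ℚ) ^ ((k:ℤ) - 2) + ∑ i ∈ T, (2:ℚ) ^ ((i:ℤ) - 2) := Finset.sum_insert hkT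
  have hLsub : L ⊆ Finset.Icc 2 (k-1) := by
    intro i hi
    obtain ⟨hiS, hik⟩ := Finset.mem_filter.mp hi
    obtain ⟨hiIcc, hifix⟩ := Finset.mem_filter.mp hiS
    have hi1 : i ≠ 1 := by rintro rfl; exact h1 hifix
    have := (Finset.mem_Icc.mp hiIcc).1
    exact Finset.mem_Icc.mpr ⟨by omega, by omega⟩
  have hstep2 : ∑ i ∈ L, (2:ℚ) ^ ((i:ℤ) - 2) + 1 ≤ (2:ℚ) ^ ((k:ℤ) - 2) := by
    have hLe : ∑ i ∈ L, (2:ℚ) ^ ((i:ℤ) - 2) ≤ ∑ i ∈ Finset.Icc 2 (k-1), (2:ℚ) ^ ((i:ℤ) - 2) :=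
      Finset.sum_le_sum_of_subset_of_nonneg hLsub (fun i _ _ => le_of_lt (by positivity))
    rw [geom_aux (k-1) (by omega)] at hLe
    have hcast : ((k-1:ℕ):ℤ) - 1 = (k:ℤ) - 2 := by
      have : ((k-1:ℕ):ℤ) = (k:ℤ) - 1 := by omega
      omega
    rw [hcast] at hLe
    linarith
  have hmain : wilf n (f w) ≥ wilf n w + 1 := by
    rw [hsplit]; linarith
  exact ⟨by linarith, hmain⟩
end

section
/- Let n ≥ 1 and let f be any homing shuffle on S_n. Then f terminates in fewer than 2^{n-1} iterations on every permutation: for all w ∈ S_n, f^{2^{n-1} - 1}(w)(1) = 1. -/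
def Phi (n : ℕ) (w : Equiv.Perm ℕ) : ℕ :=
  ∑ i ∈ Finset.Ioc 1 n, if w i ≠ i then 2 ^ (i - 2) else 0

lemma sumpow (k : ℕ) (hk : 1 ≤ k) :
    ∑ i ∈ Finset.Ioc 1 k, 2 ^ (i - 2) = 2 ^ (k - 1) - 1 := by
  induction k with
  | zero => omega
  | succ k ih =>
    rcases Nat.lt_or_ge 1 (k+1) with h | h
    · have hk1 : 1 ≤ k := by omega
      rw [Finset.sum_Ioc_succ_top (by omega), ih hk1]
      have h2 : 2 ^ (k-1) + 2^(k-1) = 2^k := by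
        rw [← two_mul, ← pow_succ']
        congr 1; omega
      have hpos : 0 < 2 ^ (k-1) := Nat.pow_pos (by norm_num)
      have e1 : (k + 1) - 2 = k - 1 := by omega
      have e2 : (k + 1) - 1 = k := by omega
      rw [e1, e2]
      omega
    · have : k = 0 := by omega
      subst this
      simp

lemma w1_mem (n : ℕ) (w : Equiv.Perm ℕ) (hw : IsPermOn n w) (h1 : w 1 ≠ 1) :
    w 1 ∈ Finset.Icc 1 n := by
  by_contra h
  have := hw _ h
  exact h1 (w.injective this)

lemma phi_le (n : ℕ) (hn : 1 ≤ n) (w : Equiv.Perm ℕ) :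
    Phi n w ≤ 2 ^ (n - 1) - 1 := by
  rw [← sumpow n hn]
  apply Finset.sum_le_sum
  intro i _
  split <;> simp

lemma phi_zero (n : ℕ) (w : Equiv.Perm ℕ) (hw : IsPermOn n w) (h : Phi n w = 0) :
    w 1 = 1 := by
  have hfix : ∀ i : ℕ, i ≠ 1 → w i = i := by
    intro i hi
    by_cases hmem : i ∈ Finset.Icc 1 n
    · have hio : i ∈ Finset.Ioc 1 n := by
        simp only [Finset.mem_Icc] at hmem
        simp only [Finset.mem_Ioc]; omega
      by_contra hne
      have : (if w i ≠ i then 2 ^ (i - 2) else 0) = 0 :=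
        (Finset.sum_eq_zero_iff.mp h) _ hio
      rw [if_pos hne] at this
      simp at this
    · exact hw _ hmem
  by_contra h1
  have := hfix (w 1) h1
  exact h1 (w.injective this)

lemma phi_decrease (n : ℕ) (f : Equiv.Perm ℕ → Equiv.Perm ℕ)
    (hf : IsHomingShuffle n f) (w : Equiv.Perm ℕ) (hw : IsPermOn n w)
    (h1 : w 1 ≠ 1) : Phi n (f w) + 1 ≤ Phi n w := by
  obtain ⟨hperm, hfix, habove⟩ := hf w hw
  set k := w 1 with hk
  have hkmem := w1_mem n w hw h1
  simp only [Finset.mem_Icc] at hkmem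
  have hk2 : 2 ≤ k := by omega
  have hkn : k ≤ n := hkmem.2
  -- split sums at k
  have hsplitf : Phi n (f w) = (∑ i ∈ Finset.Ioc 1 k, if f w i ≠ i then 2 ^ (i - 2) else 0)
      + ∑ i ∈ Finset.Ioc k n, if f w i ≠ i then 2 ^ (i - 2) else 0 := by
    rw [Phi, ← Finset.sum_Ioc_consecutive _ (by omega : 1 ≤ k) hkn]
  have hsplitw : Phi n w = (∑ i ∈ Finset.Ioc 1 k, if w i ≠ i then 2 ^ (i - 2) else 0)
      + ∑ i ∈ Finset.Ioc k n, if w i ≠ i then 2 ^ (i - 2) else 0 := by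
    rw [Phi, ← Finset.sum_Ioc_consecutive _ (by omega : 1 ≤ k) hkn]
  -- tails agree
  have htail : (∑ i ∈ Finset.Ioc k n, if f w i ≠ i then 2 ^ (i - 2) else 0)
      = ∑ i ∈ Finset.Ioc k n, if w i ≠ i then 2 ^ (i - 2) else 0 := by
    apply Finset.sum_congr rfl
    intro i hi
    simp only [Finset.mem_Ioc] at hi
    rw [habove i hi.1]
  -- head of f w bounded
  have hheadf : (∑ i ∈ Finset.Ioc 1 k, if f w i ≠ i then 2 ^ (i - 2) else 0)
      ≤ 2 ^ (k - 2) - 1 := by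
    have : (∑ i ∈ Finset.Ioc 1 k, if f w i ≠ i then 2 ^ (i - 2) else 0)
        = (∑ i ∈ Finset.Ioc 1 (k-1), if f w i ≠ i then 2 ^ (i - 2) else 0)
          + (if f w k ≠ k then 2 ^ (k - 2) else 0) := by
      have hk' : k = (k - 1) + 1 := by omega
      rw [hk', Finset.sum_Ioc_succ_top (by omega), ← hk']
    rw [this, if_neg (by simp [hfix])]
    have hb : (∑ i ∈ Finset.Ioc 1 (k-1), if f w i ≠ i then 2 ^ (i - 2) else 0)
        ≤ ∑ i ∈ Finset.Ioc 1 (k-1), 2 ^ (i - 2) := by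
      apply Finset.sum_le_sum; intro i _; split <;> simp
    rw [sumpow (k-1) (by omega)] at hb
    have : k - 1 - 1 = k - 2 := by omega
    rw [this] at hb
    omega
  -- head of w at least 2^(k-2)
  have hheadw : 2 ^ (k - 2) ≤ ∑ i ∈ Finset.Ioc 1 k, if w i ≠ i then 2 ^ (i - 2) else 0 := by
    have hwk : w k ≠ k := by
      intro h
      exact h1 (w.injective (hk ▸ h.symm ▸ rfl : w 1 = w k) ▸ rfl)
    calc 2 ^ (k - 2) = (if w k ≠ k then 2 ^ (k - 2) else 0) := by rw [if_pos hwk]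
      _ ≤ _ := Finset.single_le_sum (f := fun i => if w i ≠ i then 2 ^ (i-2) else 0)
          (fun i _ => Nat.zero_le _) (by simp only [Finset.mem_Ioc]; omega)
  have hpos : 0 < 2 ^ (k - 2) := Nat.pow_pos (by norm_num)
  omega

lemma persist (n : ℕ) (f : Equiv.Perm ℕ → Equiv.Perm ℕ)
    (hf : IsHomingShuffle n f) :
    ∀ (m : ℕ) (w : Equiv.Perm ℕ), IsPermOn n w → w 1 = 1 → (f^[m] w) 1 = 1 := by
  intro m
  induction m with
  | zero => intro w _ h; simpa
  | succ m ih =>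
    intro w hw h
    rw [Function.iterate_succ_apply]
    obtain ⟨hperm, hfix, _⟩ := hf w hw
    exact ih (f w) hperm (by rwa [h] at hfix)

lemma main_ind (n : ℕ) (f : Equiv.Perm ℕ → Equiv.Perm ℕ)
    (hf : IsHomingShuffle n f) :
    ∀ (m : ℕ) (w : Equiv.Perm ℕ), IsPermOn n w → Phi n w ≤ m → (f^[m] w) 1 = 1 := by
  intro m
  induction m with
  | zero =>
    intro w hw h
    simpa using phi_zero n w hw (Nat.le_zero.mp h)
  | succ m ih =>
    intro w hw h
    by_cases h1 : w 1 = 1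
    · exact persist n f hf _ w hw h1
    · rw [Function.iterate_succ_apply]
      obtain ⟨hperm, _, _⟩ := hf w hw
      exact ih (f w) hperm (by have := phi_decrease n f hf w hw h1; omega)

theorem stmt_5 (n : ℕ) (hn : 1 ≤ n) (f : Equiv.Perm ℕ → Equiv.Perm ℕ)
    (hf : IsHomingShuffle n f) :
    ∀ w : Equiv.Perm ℕ, IsPermOn n w → (f^[2 ^ (n - 1) - 1] w) 1 = 1 := by
  intro w hw
  exact main_ind n f hf _ w hw (phi_le n hn w)
end

section
/- The transposition shuffle T sorts a permutation w ∈ S_n if and only if w is a single cycle containing 1, i.e., either w is the identity or every non-fixed point of w lies in the cycle of w containing 1 (equivalently, w is a cyclic permutation whose support contains 1). -/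
lemma Tshuffle_apply (v : Equiv.Perm ℕ) (x : ℕ) :
    Tshuffle v x = v (Equiv.swap 1 (v 1) x) := rfl

lemma Tshuffle_of_fixed {v : Equiv.Perm ℕ} (h : v 1 = 1) : Tshuffle v = v := by
  rw [Tshuffle, h, Equiv.swap_self]
  exact mul_one v

lemma zpow_one_mem_of_closed {g : Equiv.Perm ℕ} {C : Set ℕ} (h1 : (1 : ℕ) ∈ C)
    (hg : ∀ z ∈ C, g z ∈ C) (hg' : ∀ z ∈ C, g⁻¹ z ∈ C) :
    ∀ i : ℤ, (g ^ i) 1 ∈ C := by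
  have hpos : ∀ m : ℕ, (g ^ m) 1 ∈ C := by
    intro m
    induction m with
    | zero => simpa using h1
    | succ m ih => rw [pow_succ', Equiv.Perm.mul_apply]; exact hg _ ih
  have hneg : ∀ m : ℕ, (g⁻¹ ^ m) 1 ∈ C := by
    intro m
    induction m with
    | zero => simpa using h1
    | succ m ih => rw [pow_succ', Equiv.Perm.mul_apply]; exact hg' _ ih
  intro i
  rcases le_or_gt 0 i with h | h
  · obtain ⟨m, rfl⟩ := Int.eq_ofNat_of_zero_le h
    rw [zpow_natCast]; exact hpos m
  · obtain ⟨m, rfl⟩ : ∃ m : ℕ, i = -(m : ℤ) := ⟨i.natAbs, by omega⟩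
    rw [zpow_neg, zpow_natCast, ← inv_pow]; exact hneg m

/-- Points not on the cycle of `1` are untouched by the shuffle, and stay off
the cycle of `1`. -/
lemma Tshuffle_invariant {v : Equiv.Perm ℕ} {y : ℕ} (hy : ¬ v.SameCycle 1 y) :
    Tshuffle v y = v y ∧ ¬ (Tshuffle v).SameCycle 1 y := by
  by_cases hk1 : v 1 = 1
  · rw [Tshuffle_of_fixed hk1]; exact ⟨rfl, hy⟩
  · have hy1 : y ≠ 1 := fun h => hy (h ▸ Equiv.Perm.SameCycle.refl v 1)
    have hyk : y ≠ v 1 := fun h => hy (h ▸ ⟨1, by simp⟩)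
    constructor
    · rw [Tshuffle_apply, Equiv.swap_apply_of_ne_of_ne hy1 hyk]
    · rintro ⟨i, hi⟩
      set C : Set ℕ := {z | v.SameCycle 1 z} with hC
      have h1C : (1 : ℕ) ∈ C := Equiv.Perm.SameCycle.refl v 1
      have hkC : v 1 ∈ C := ⟨1, by simp⟩
      have hvC : ∀ z ∈ C, v z ∈ C := by
        rintro z ⟨j, hj⟩
        exact ⟨1 + j, by rw [zpow_add, zpow_one, Equiv.Perm.mul_apply, hj]⟩
      have hvC' : ∀ z ∈ C, v⁻¹ z ∈ C := by
        rintro z ⟨j, hj⟩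
        exact ⟨-1 + j, by rw [zpow_add, Equiv.Perm.mul_apply, hj, zpow_neg, zpow_one]⟩
      have hsC : ∀ z ∈ C, Equiv.swap 1 (v 1) z ∈ C := by
        intro z hz
        rcases eq_or_ne z 1 with rfl | hz1
        · rw [Equiv.swap_apply_left]; exact hkC
        rcases eq_or_ne z (v 1) with rfl | hzk
        · rw [Equiv.swap_apply_right]; exact h1C
        · rw [Equiv.swap_apply_of_ne_of_ne hz1 hzk]; exact hz
      have hTC : ∀ z ∈ C, Tshuffle v z ∈ C := by
        intro z hz
        rw [Tshuffle_apply]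
        exact hvC _ (hsC _ hz)
      have hTC' : ∀ z ∈ C, (Tshuffle v)⁻¹ z ∈ C := by
        intro z hz
        have : (Tshuffle v)⁻¹ z = Equiv.swap 1 (v 1) (v⁻¹ z) := by
          rw [Tshuffle, mul_inv_rev, Equiv.Perm.mul_apply, Equiv.swap_inv]
        rw [this]
        exact hsC _ (hvC' _ hz)
      have : y ∈ C := hi ▸ zpow_one_mem_of_closed h1C hTC hTC' i
      exact hy this

/-- The shuffle of a nontrivial cycle through `1` is the identity or again a
nontrivial cycle through `1`. -/
lemma Tshuffle_shrink {c : Equiv.Perm ℕ} (hc : c.IsCycle) (h1 : c 1 ≠ 1) :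
    Tshuffle c = 1 ∨ ((Tshuffle c).IsCycle ∧ Tshuffle c 1 ≠ 1) := by
  by_cases h2 : c (c 1) = 1
  · left
    have hswap : c = Equiv.swap 1 (c 1) := hc.eq_swap_of_apply_apply_eq_self h1 h2
    rw [Tshuffle]
    nth_rewrite 1 [hswap]
    exact Equiv.swap_mul_self _ _
  · right
    have hkey : Tshuffle c = Equiv.swap (c 1) (c (c 1)) * c := by
      rw [Tshuffle, Equiv.mul_swap_eq_swap_mul]
    constructor
    · rw [hkey]
      refine hc.swap_mul ?_ ?_
      · intro h; exact h1 (c.injective h)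
      · intro h
        exact h2 (c.injective h)
    · rw [Tshuffle_apply, Equiv.swap_apply_left]
      exact h2

lemma sorts_aux (N : ℕ) : ∀ s : Finset ℕ, s.card ≤ N → ∀ v : Equiv.Perm ℕ,
    (∀ i ∉ s, v i = i) → (v = 1 ∨ (v.IsCycle ∧ v 1 ≠ 1)) →
    ∃ m, Tshuffle^[m] v = 1 := by
  induction N with
  | zero =>
    intro s hs v hfix hv
    rcases hv with rfl | ⟨hc, h1⟩
    · exact ⟨0, rfl⟩
    · exfalso
      have h1s : (1 : ℕ) ∈ s := by
        by_contra h; exact h1 (hfix 1 h)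
      have := Finset.card_pos.mpr ⟨1, h1s⟩
      omega
  | succ N ih =>
    intro s hs v hfix hv
    rcases hv with rfl | ⟨hc, h1⟩
    · exact ⟨0, rfl⟩
    · have hks : v 1 ∈ s := by
        by_contra h
        have hkk : v (v 1) = v 1 := hfix (v 1) h
        exact h1 (v.injective hkk)
      have hfix' : ∀ i ∉ s.erase (v 1), Tshuffle v i = i := by
        intro i hi
        rw [Finset.mem_erase] at hi
        push_neg at hi
        by_cases hik : i = v 1
        · rw [hik, Tshuffle_apply, Equiv.swap_apply_right]
        · have his : i ∉ s := hi hik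
          have hi1 : i ≠ 1 := by
            rintro rfl
            exact h1 (hfix 1 his)
          rw [Tshuffle_apply, Equiv.swap_apply_of_ne_of_ne hi1 hik]
          exact hfix i his
      have hcard : (s.erase (v 1)).card ≤ N := by
        have := Finset.card_erase_of_mem hks
        omega
      obtain ⟨m, hm⟩ := ih (s.erase (v 1)) hcard (Tshuffle v) hfix'
        (Tshuffle_shrink hc h1)
      exact ⟨m + 1, by rw [Function.iterate_succ_apply]; exact hm⟩

/-- `T` sorts `w` if and only if `w` is the identity or a single cycle whose
support contains `1`. -/
theorem stmt_6 (n : ℕ) (w : Equiv.Perm ℕ) (hw : IsPermOn n w) :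
    (∃ m : ℕ, Tshuffle^[m] w = 1) ↔ (w = 1 ∨ (w.IsCycle ∧ w 1 ≠ 1)) := by
  constructor
  · rintro ⟨m, hm⟩
    by_cases hid : w = 1
    · exact Or.inl hid
    right
    have h1 : w 1 ≠ 1 := by
      intro h
      have hfixp : ∀ j : ℕ, Tshuffle^[j] w = w :=
        fun j => Function.iterate_fixed (Tshuffle_of_fixed h) j
      exact hid ((hfixp m).symm.trans hm)
    refine ⟨⟨1, h1, ?_⟩, h1⟩
    intro y hy
    by_contra hnc
    have key : ∀ j, (Tshuffle^[j] w) y ≠ y ∧ ¬ (Tshuffle^[j] w).SameCycle 1 y := by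
      intro j
      induction j with
      | zero => exact ⟨hy, hnc⟩
      | succ j ihj =>
        rw [Function.iterate_succ_apply']
        obtain ⟨he, hs⟩ := Tshuffle_invariant ihj.2
        exact ⟨by rw [he]; exact ihj.1, hs⟩
    have := (key m).1
    rw [hm] at this
    exact this rfl
  · intro hv
    exact sorts_aux (Finset.Icc 1 n).card (Finset.Icc 1 n) le_rfl w hw hv
end

section
/- Let f be a homing shuffle on S_n and let w ∈ U_n. Then i_{f(w)} ≤ i_w. -/
/-- `i_w`: the smallest `k ∈ {1,…,n}` such that `w({1,…,k}) = {1,…,k}`. -/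
noncomputable def permIdx (n : ℕ) (w : Equiv.Perm ℕ) : ℕ :=
  sInf {k : ℕ | 1 ≤ k ∧ k ≤ n ∧ (Finset.Icc 1 k).image ⇑w = Finset.Icc 1 k}

/-- `U_n`: the set of unsortable permutations in `S_n`, i.e. those `w ∈ S_n`
having a non-fixed point `i > i_w`. -/
def Unsortables (n : ℕ) : Set (Equiv.Perm ℕ) :=
  {w | IsPermOn n w ∧ ∃ i : ℕ, permIdx n w < i ∧ w i ≠ i}

lemma permOn_image {n : ℕ} {w : Equiv.Perm ℕ} (h : IsPermOn n w) :
    (Finset.Icc 1 n).image ⇑w = Finset.Icc 1 n := by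
  apply Finset.eq_of_subset_of_card_le
  · intro y hy
    obtain ⟨x, hx, rfl⟩ := Finset.mem_image.mp hy
    by_contra hy'
    have hww : w (w x) = w x := h _ hy'
    have : w x = x := w.injective hww
    rw [this] at hy'
    exact hy' hx
  · rw [Finset.card_image_of_injective _ w.injective]

theorem stmt_8 (n : ℕ) (f : Equiv.Perm ℕ → Equiv.Perm ℕ)
    (hf : IsHomingShuffle n f) (w : Equiv.Perm ℕ) (hw : w ∈ Unsortables n) :
    permIdx n (f w) ≤ permIdx n w := by
  obtain ⟨hwP, -⟩ := hw
  obtain ⟨hfP, -, hgt⟩ := hf w hwP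
  rcases Nat.eq_zero_or_pos n with rfl | hn
  · have hset : {k : ℕ | 1 ≤ k ∧ k ≤ 0 ∧
        (Finset.Icc 1 k).image ⇑(f w) = Finset.Icc 1 k} = ∅ := by
      ext k
      simp only [Set.mem_setOf_eq, Set.mem_empty_iff_false, iff_false]
      rintro ⟨h1, h2, -⟩; omega
    unfold permIdx
    rw [hset, Nat.sInf_empty]
    exact Nat.zero_le _
  · have hSne : {k : ℕ | 1 ≤ k ∧ k ≤ n ∧
        (Finset.Icc 1 k).image ⇑w = Finset.Icc 1 k}.Nonempty :=
      ⟨n, hn, le_refl n, permOn_image hwP⟩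
    have hmem : permIdx n w ∈ {k : ℕ | 1 ≤ k ∧ k ≤ n ∧
        (Finset.Icc 1 k).image ⇑w = Finset.Icc 1 k} := Nat.sInf_mem hSne
    set m := permIdx n w with hm
    obtain ⟨h1m, hmn, himg⟩ := hmem
    have hw1 : w 1 ≤ m := by
      have h1 : (1 : ℕ) ∈ Finset.Icc 1 m := Finset.mem_Icc.mpr ⟨le_refl 1, h1m⟩
      have : w 1 ∈ Finset.Icc 1 m := himg ▸ Finset.mem_image_of_mem _ h1
      exact (Finset.mem_Icc.mp this).2
    have hC : ∀ i, m < i → f w i = w i := fun i hi => hgt i (lt_of_le_of_lt hw1 hi)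
    have h0w : w 0 = 0 := hwP 0 (by simp)
    have h0f : f w 0 = 0 := hfP 0 (by simp)
    have hD : ∀ i, m < i → m < f w i := by
      intro i hi
      rw [hC i hi]
      by_contra hle
      push_neg at hle
      have hwi1 : 1 ≤ w i := by
        rcases Nat.eq_zero_or_pos (w i) with h | h
        · have : i = 0 := w.injective (h.trans h0w.symm)
          omega
        · exact h
      have hmemi : w i ∈ Finset.Icc 1 m := Finset.mem_Icc.mpr ⟨hwi1, hle⟩
      rw [← himg] at hmemi
      obtain ⟨j, hj, hji⟩ := Finset.mem_image.mp hmemi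
      have hji' : j = i := w.injective hji
      have := (Finset.mem_Icc.mp hj).2
      omega
    have himg' : (Finset.Icc 1 m).image ⇑(f w) = Finset.Icc 1 m := by
      refine (Finset.eq_of_subset_of_card_le ?_ ?_).symm
      · intro y hy
        obtain ⟨hy1, hym⟩ := Finset.mem_Icc.mp hy
        set x := (f w).symm y with hx
        have hfx : f w x = y := (f w).apply_symm_apply y
        have hx1 : 1 ≤ x := by
          rcases Nat.eq_zero_or_pos x with h | h
          · rw [h, h0f] at hfx; omega
          · exact h
        have hxm : x ≤ m := by
          by_contra hgt'
          push_neg at hgt'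
          have := hD x hgt'
          omega
        exact Finset.mem_image.mpr ⟨x, Finset.mem_Icc.mpr ⟨hx1, hxm⟩, hfx⟩
      · rw [Finset.card_image_of_injective _ (f w).injective]
    exact Nat.sInf_le ⟨h1m, hmn, himg'⟩
end

section
/- Let f be a homing shuffle on S_n. If w ∈ U_n, then f(w) ∈ U_n; that is, the set U_n of unsortable permutations is closed under every homing shuffle. -/
/-- If a permutation maps the complement of a finset into the complement,
then the image of the finset is the finset. -/
lemma image_eq_of_compl (g : Equiv.Perm ℕ) (s : Finset ℕ)
    (h : ∀ i, i ∉ s → g i ∉ s) : s.image ⇑g = s := by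
  have hsub : s ⊆ s.image ⇑g := by
    intro x hx
    refine Finset.mem_image.mpr ⟨g.symm x, ?_, g.apply_symm_apply x⟩
    by_contra hy
    have := h _ hy
    rw [g.apply_symm_apply] at this
    exact this hx
  have hcard : (s.image ⇑g).card ≤ s.card := by
    rw [Finset.card_image_of_injective _ g.injective]
  exact (Finset.eq_of_subset_of_card_le hsub hcard).symm

theorem stmt_9 (n : ℕ) (f : Equiv.Perm ℕ → Equiv.Perm ℕ)
    (hf : IsHomingShuffle n f) (w : Equiv.Perm ℕ) (hw : w ∈ Unsortables n) :
    f w ∈ Unsortables n := by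
  obtain ⟨hperm, i, hi, hwi⟩ := hw
  obtain ⟨hpf, hfix, hgt⟩ := hf w hperm
  -- n ≥ 1
  have hin : i ∈ Finset.Icc 1 n := by
    by_contra hc
    exact hwi (hperm i hc)
  have hn1 : 1 ≤ n := le_trans (Finset.mem_Icc.mp hin).1 (Finset.mem_Icc.mp hin).2
  -- n is in the defining set of permIdx n w
  have hnmem : n ∈ {k : ℕ | 1 ≤ k ∧ k ≤ n ∧ (Finset.Icc 1 k).image ⇑w = Finset.Icc 1 k} := by
    refine ⟨hn1, le_refl n, image_eq_of_compl w _ ?_⟩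
    intro j hj
    rw [hperm j hj]; exact hj
  have hne : {k : ℕ | 1 ≤ k ∧ k ≤ n ∧ (Finset.Icc 1 k).image ⇑w = Finset.Icc 1 k}.Nonempty :=
    ⟨n, hnmem⟩
  have hmem := Nat.sInf_mem hne
  set iw := permIdx n w with hiw
  have hmem' : 1 ≤ iw ∧ iw ≤ n ∧ (Finset.Icc 1 iw).image ⇑w = Finset.Icc 1 iw := hmem
  obtain ⟨h1, h2, h3⟩ := hmem'
  -- w 1 ≤ iw
  have hw1 : w 1 ≤ iw := by
    have : w 1 ∈ Finset.Icc 1 iw := by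
      rw [← h3]
      exact Finset.mem_image.mpr ⟨1, Finset.mem_Icc.mpr ⟨le_refl 1, h1⟩, rfl⟩
    exact (Finset.mem_Icc.mp this).2
  -- f w maps the complement of Icc 1 iw into the complement
  have hcompl : ∀ j, j ∉ Finset.Icc 1 iw → f w j ∉ Finset.Icc 1 iw := by
    intro j hj
    by_cases hjn : j ∈ Finset.Icc 1 n
    · have hj1 : 1 ≤ j := (Finset.mem_Icc.mp hjn).1
      have hjgt : iw < j := by
        simp only [Finset.mem_Icc, not_and, not_le] at hj
        exact hj hj1
      have hfj : f w j = w j := hgt j (lt_of_le_of_lt hw1 hjgt)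
      rw [hfj]
      intro hmem2
      rw [← h3] at hmem2
      obtain ⟨a, ha, hwa⟩ := Finset.mem_image.mp hmem2
      have : a = j := w.injective hwa
      subst this
      exact absurd (Finset.mem_Icc.mp ha).2 (not_le.mpr hjgt)
    · rw [hpf j hjn]
      exact hj
  -- iw is in the defining set for f w, hence permIdx n (f w) ≤ iw
  have hmemf : iw ∈ {k : ℕ | 1 ≤ k ∧ k ≤ n ∧ (Finset.Icc 1 k).image ⇑(f w) = Finset.Icc 1 k} :=
    ⟨h1, h2, image_eq_of_compl (f w) _ hcompl⟩
  have hle : permIdx n (f w) ≤ iw := Nat.sInf_le hmemf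
  refine ⟨hpf, i, lt_of_le_of_lt hle hi, ?_⟩
  rw [hgt i (lt_of_le_of_lt hw1 hi)]
  exact hwi
end

section
/- Let M be a max shuffle on S_n and let w ∈ S_n with w ∉ U_n. Then M(w) ∉ U_n; that is, the complement of the unsortable set U_n is closed under every max shuffle. -/
/-- A max shuffle on `S_n`: a homing shuffle `M` such that for every `w ∈ S_n`
with `w 1 ≠ 1`, the new front card `M w 1` equals `max (w({2,…,k}))` where `k := w 1`. -/
def IsMaxShuffle (n : ℕ) (M : Equiv.Perm ℕ → Equiv.Perm ℕ) : Prop :=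
  IsHomingShuffle n M ∧
    ∀ w : Equiv.Perm ℕ, IsPermOn n w → w 1 ≠ 1 →
      ((Finset.Icc 2 (w 1)).image ⇑w).max = (M w 1 : WithBot ℕ)

lemma permOn_zero {n : ℕ} {w : Equiv.Perm ℕ} (hw : IsPermOn n w) : w 0 = 0 :=
  hw 0 (by simp)

lemma permOn_mem {n : ℕ} {w : Equiv.Perm ℕ} (hw : IsPermOn n w) {i : ℕ}
    (hi : i ∈ Finset.Icc 1 n) : w i ∈ Finset.Icc 1 n := by
  by_contra h
  have h2 : w i = i := w.injective (hw (w i) h)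
  exact h (by rwa [h2])

lemma permOn_pos {n : ℕ} {w : Equiv.Perm ℕ} (hw : IsPermOn n w) {i : ℕ}
    (hi : 1 ≤ i) : 1 ≤ w i := by
  rcases Nat.eq_zero_or_pos (w i) with h0 | h0
  · have : w i = w 0 := by rw [permOn_zero hw, h0]
    have := w.injective this
    omega
  · exact h0

/-- If a permutation on `[1,n]` fixes everything above `t ≤ n`,
then it maps `[1,t]` onto `[1,t]`. -/
lemma image_Icc_of_fix {n t : ℕ} {w : Equiv.Perm ℕ} (hw : IsPermOn n w)
    (hfix : ∀ i, t < i → w i = i) :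
    (Finset.Icc 1 t).image ⇑w = Finset.Icc 1 t := by
  apply Finset.eq_of_subset_of_card_le
  · intro x hx
    obtain ⟨i, hi, rfl⟩ := Finset.mem_image.mp hx
    simp only [Finset.mem_Icc] at hi ⊢
    refine ⟨permOn_pos hw hi.1, ?_⟩
    by_contra h
    push_neg at h
    have h2 : w i = i := w.injective (hfix _ h)
    omega
  · rw [Finset.card_image_of_injective _ w.injective]

/-- If two permutations on `[1,n]` agree above `t` and one maps `[1,t]` onto
itself, so does the other. -/
lemma image_Icc_of_agree {n t : ℕ} {u v : Equiv.Perm ℕ}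
    (hu : IsPermOn n u) (hv : IsPermOn n v)
    (hagree : ∀ i, t < i → v i = u i)
    (him : (Finset.Icc 1 t).image ⇑u = Finset.Icc 1 t) :
    (Finset.Icc 1 t).image ⇑v = Finset.Icc 1 t := by
  apply Finset.eq_of_subset_of_card_le
  · intro x hx
    obtain ⟨i, hi, rfl⟩ := Finset.mem_image.mp hx
    simp only [Finset.mem_Icc] at hi ⊢
    refine ⟨permOn_pos hv hi.1, ?_⟩
    by_contra h
    push_neg at h
    set c := v i with hc
    have hsymm : u (u.symm c) = c := u.apply_symm_apply c
    have h1 : t < u.symm c := by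
      by_contra h2
      push_neg at h2
      rcases Nat.eq_zero_or_pos (u.symm c) with h0 | h0
      · have : c = 0 := by rw [← hsymm, h0, permOn_zero hu]
        omega
      · have : c ∈ Finset.Icc 1 t := by
          rw [← him, ← hsymm]
          exact Finset.mem_image_of_mem _ (Finset.mem_Icc.mpr ⟨h0, h2⟩)
        have := Finset.mem_Icc.mp this
        omega
    have h3 : v (u.symm c) = v i := by rw [hagree _ h1, hsymm, hc]
    have := v.injective h3
    omega
  · rw [Finset.card_image_of_injective _ v.injective]

theorem stmt_13 (n : ℕ) (M : Equiv.Perm ℕ → Equiv.Perm ℕ)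
    (hM : IsMaxShuffle n M) (w : Equiv.Perm ℕ) (hw : IsPermOn n w)
    (hwU : w ∉ Unsortables n) :
    M w ∉ Unsortables n := by
  obtain ⟨hMperm, hMk, hMgt⟩ := hM.1 w hw
  by_cases hk1 : w 1 = 1
  · -- in this case M w = w
    have hMw : M w = w := by
      ext i
      rcases Nat.lt_trichotomy i 1 with h | h | h
      · interval_cases i
        rw [permOn_zero hMperm, permOn_zero hw]
      · subst h
        rw [hk1] at hMk
        rw [hMk, hk1]
      · exact hMgt i (by rw [hk1]; exact h)
    rw [hMw]; exact hwU
  · -- main case : w 1 ≥ 2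
    have hn : 1 ≤ n := by
      by_contra h
      exact hk1 (hw 1 (by simp; omega))
    have hk2 : 2 ≤ w 1 := by
      have := permOn_pos hw (le_refl 1)
      omega
    have hkn : w 1 ≤ n := (Finset.mem_Icc.mp (permOn_mem hw (by simp [hn]))).2
    -- the defining set for permIdx n w
    have hjmem : permIdx n w ∈
        {k : ℕ | 1 ≤ k ∧ k ≤ n ∧ (Finset.Icc 1 k).image ⇑w = Finset.Icc 1 k} := by
      apply Nat.sInf_mem
      exact ⟨n, hn, le_refl n, image_Icc_of_fix hw (fun i hi => hw i (by simp; omega))⟩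
    obtain ⟨hj1, hjn, hjim⟩ := hjmem
    set j := permIdx n w with hjdef
    have hkj : w 1 ≤ j := by
      have : w 1 ∈ Finset.Icc 1 j := by
        rw [← hjim]
        exact Finset.mem_image_of_mem _ (Finset.mem_Icc.mpr ⟨le_refl 1, hj1⟩)
      exact (Finset.mem_Icc.mp this).2
    have hwfix : ∀ i, j < i → w i = i := by
      intro i hi
      by_contra h
      exact hwU ⟨hw, i, hi, h⟩
    have hMfixj : ∀ i, j < i → M w i = i := fun i hi =>
      (hMgt i (lt_of_le_of_lt hkj hi)).trans (hwfix i hi)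
    have hMjim : (Finset.Icc 1 j).image ⇑(M w) = Finset.Icc 1 j :=
      image_Icc_of_fix hMperm hMfixj
    have hj'mem : permIdx n (M w) ∈
        {k : ℕ | 1 ≤ k ∧ k ≤ n ∧ (Finset.Icc 1 k).image ⇑(M w) = Finset.Icc 1 k} :=
      Nat.sInf_mem ⟨j, hj1, hjn, hMjim⟩
    obtain ⟨hj'1, hj'n, hj'im⟩ := hj'mem
    set j' := permIdx n (M w) with hj'def
    have hj'j : j' ≤ j := Nat.sInf_le ⟨hj1, hjn, hMjim⟩
    -- it suffices to show M w fixes everything above j'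
    rintro ⟨-, i, hi, hne⟩
    apply hne
    by_cases hcase : w 1 ≤ j'
    · -- then w maps [1,j'] onto itself, so j = j' by minimality
      have hwim : (Finset.Icc 1 j').image ⇑w = Finset.Icc 1 j' :=
        image_Icc_of_agree hMperm hw
          (fun i hi => (hMgt i (lt_of_le_of_lt hcase hi)).symm) hj'im
      have hjj' : j ≤ j' := Nat.sInf_le ⟨hj'1, hj'n, hwim⟩
      exact hMfixj i (by omega)
    · -- j' < w 1 : forces M w 1 = w 1 - 1 = j' and j = w 1
      push_neg at hcase
      have hm1 : M w 1 ∈ Finset.Icc 1 j' := by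
        rw [← hj'im]
        exact Finset.mem_image_of_mem _ (Finset.mem_Icc.mpr ⟨le_refl 1, hj'1⟩)
      have hm1' := Finset.mem_Icc.mp hm1
      have hmaxeq : ((Finset.Icc 2 (w 1)).image ⇑w).max = (M w 1 : WithBot ℕ) :=
        hM.2 w hw hk1
      have hsub : (Finset.Icc 2 (w 1)).image ⇑w ⊆ Finset.Icc 1 (M w 1) := by
        intro x hx
        obtain ⟨i', hi', rfl⟩ := Finset.mem_image.mp hx
        have hi'' := Finset.mem_Icc.mp hi'
        refine Finset.mem_Icc.mpr ⟨permOn_pos hw (by omega), ?_⟩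
        have hle : (w i' : WithBot ℕ) ≤ (M w 1 : WithBot ℕ) := by
          rw [← hmaxeq]
          exact Finset.le_max hx
        exact_mod_cast hle
      have hcard : ((Finset.Icc 2 (w 1)).image ⇑w).card = w 1 - 1 := by
        rw [Finset.card_image_of_injective _ w.injective, Nat.card_Icc]
        omega
      have hm_ge : w 1 - 1 ≤ M w 1 := by
        have := Finset.card_le_card hsub
        rw [hcard, Nat.card_Icc] at this
        omega
      -- so M w 1 = w 1 - 1 = j'
      have hj'eq : j' = w 1 - 1 := by omega
      -- show w maps [1, w 1] onto itself, hence j = w 1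
      have him2 : (Finset.Icc 2 (w 1)).image ⇑w = Finset.Icc 1 (w 1 - 1) := by
        apply Finset.eq_of_subset_of_card_le
        · have : M w 1 = w 1 - 1 := by omega
          rwa [this] at hsub
        · rw [hcard, Nat.card_Icc]
          omega
      have hwim : (Finset.Icc 1 (w 1)).image ⇑w = Finset.Icc 1 (w 1) := by
        have hsplit : Finset.Icc 1 (w 1) = insert 1 (Finset.Icc 2 (w 1)) := by
          ext x
          simp [Finset.mem_Icc, Finset.mem_insert]
          omega
        rw [hsplit, Finset.image_insert, him2]
        ext x
        simp [Finset.mem_Icc, Finset.mem_insert]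
        omega
      have hjk : j ≤ w 1 := Nat.sInf_le ⟨by omega, hkn, hwim⟩
      -- now i > j' = w 1 - 1
      rcases Nat.lt_or_ge (w 1) i with h | h
      · exact (hMgt i h).trans (hwfix i (by omega))
      · have : i = w 1 := by omega
        rw [this, hMk]
end

section
/- Let w ∈ S_n. Then no homing shuffle sorts w if and only if w ∈ U_n. Equivalently: there exists a homing shuffle f and m ∈ ℕ with f^m(w) the identity if and only if w ∉ U_n. -/
namespace HS

lemma image_eq_self (v : Equiv.Perm ℕ) {s : Finset ℕ} (h : ∀ i ∈ s, v i ∈ s) :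
    s.image ⇑v = s :=
  Finset.eq_of_subset_of_card_le (Finset.image_subset_iff.2 h)
    (Finset.card_image_of_injective s v.injective).ge

lemma apply_mem {n : ℕ} {w : Equiv.Perm ℕ} (hw : IsPermOn n w) {i : ℕ}
    (hi : i ∈ Finset.Icc 1 n) : w i ∈ Finset.Icc 1 n := by
  by_contra h
  have h2 := hw _ h
  have h3 := w.injective h2
  rw [h3] at h
  exact h hi

lemma one_le_apply {n : ℕ} {w : Equiv.Perm ℕ} (hw : IsPermOn n w) {i : ℕ} (hi : 1 ≤ i) :
    1 ≤ w i := by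
  have h0 : w 0 = 0 := hw 0 (by simp)
  rcases Nat.eq_zero_or_pos (w i) with h | h
  · exfalso
    have := w.injective (h.trans h0.symm)
    omega
  · exact h

lemma permIdx_spec {n : ℕ} {w : Equiv.Perm ℕ} (hw : IsPermOn n w) (hn : 1 ≤ n) :
    1 ≤ permIdx n w ∧ permIdx n w ≤ n ∧
      (Finset.Icc 1 (permIdx n w)).image ⇑w = Finset.Icc 1 (permIdx n w) := by
  have hmem : n ∈ {k : ℕ | 1 ≤ k ∧ k ≤ n ∧ (Finset.Icc 1 k).image ⇑w = Finset.Icc 1 k} :=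
    ⟨hn, le_refl n, image_eq_self w (fun i hi => apply_mem hw hi)⟩
  exact Nat.sInf_mem ⟨n, hmem⟩

lemma permIdx_le {n : ℕ} {w : Equiv.Perm ℕ} {m : ℕ} (h1 : 1 ≤ m) (h2 : m ≤ n)
    (h3 : (Finset.Icc 1 m).image ⇑w = Finset.Icc 1 m) : permIdx n w ≤ m :=
  Nat.sInf_le ⟨h1, h2, h3⟩

lemma apply_one_le_permIdx {n : ℕ} {w : Equiv.Perm ℕ} (hw : IsPermOn n w) (hn : 1 ≤ n) :
    1 ≤ w 1 ∧ w 1 ≤ permIdx n w := by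
  obtain ⟨hj1, hjn, hjim⟩ := permIdx_spec hw hn
  have hmem : w 1 ∈ Finset.Icc 1 (permIdx n w) := by
    rw [← hjim]
    exact Finset.mem_image_of_mem _ (Finset.mem_Icc.2 ⟨le_refl 1, hj1⟩)
  rw [Finset.mem_Icc] at hmem
  exact hmem

lemma one_le_n_of_ne_one {n : ℕ} {w : Equiv.Perm ℕ} (hw : IsPermOn n w) (h1 : w ≠ 1) :
    1 ≤ n := by
  by_contra h
  apply h1
  ext i
  exact hw i (by rw [Finset.mem_Icc]; omega)

lemma fixed_of_not_unsortable {n : ℕ} {w : Equiv.Perm ℕ} (hw : IsPermOn n w)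
    (hU : w ∉ Unsortables n) : ∀ i, permIdx n w < i → w i = i := by
  intro i hi
  by_contra h
  exact hU ⟨hw, i, hi, h⟩

lemma one_not_unsortable {n : ℕ} : (1 : Equiv.Perm ℕ) ∉ Unsortables n := by
  rintro ⟨-, i, -, h⟩
  exact h rfl

lemma unsortable_step {n : ℕ} {f : Equiv.Perm ℕ → Equiv.Perm ℕ} (hf : IsHomingShuffle n f)
    {w : Equiv.Perm ℕ} (hw : w ∈ Unsortables n) : f w ∈ Unsortables n := by
  obtain ⟨hwP, i0, hi0, hne⟩ := hw
  have hw1 : w ≠ 1 := by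
    intro h
    rw [h] at hne
    exact hne rfl
  have hn : 1 ≤ n := one_le_n_of_ne_one hwP hw1
  obtain ⟨hj1, hjn, hjim⟩ := permIdx_spec hwP hn
  set j := permIdx n w with hjdef
  obtain ⟨hk1, hkj⟩ := apply_one_le_permIdx hwP hn
  obtain ⟨hvP, hvk, hvgt⟩ := hf w hwP
  set v := f w with hvdef
  have hwin : ∀ i ∈ Finset.Icc (j+1) n, w i ∈ Finset.Icc (j+1) n := by
    intro i hi
    rw [Finset.mem_Icc] at hi
    have hin : i ∈ Finset.Icc 1 n := Finset.mem_Icc.2 ⟨by omega, hi.2⟩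
    have h1 := apply_mem hwP hin
    rw [Finset.mem_Icc] at h1
    rw [Finset.mem_Icc]
    refine ⟨?_, h1.2⟩
    by_contra hle
    push_neg at hle
    have hmem : w i ∈ Finset.Icc 1 j := Finset.mem_Icc.2 ⟨h1.1, by omega⟩
    rw [← hjim] at hmem
    obtain ⟨i', hi', he⟩ := Finset.mem_image.1 hmem
    have := w.injective he
    rw [Finset.mem_Icc] at hi'
    omega
  have hvin : ∀ i ∈ Finset.Icc (j+1) n, v i ∈ Finset.Icc (j+1) n := by
    intro i hi
    have higt : w 1 < i := by
      rw [Finset.mem_Icc] at hi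
      omega
    rw [hvgt i higt]
    exact hwin i hi
  have hvim2 : (Finset.Icc (j+1) n).image ⇑v = Finset.Icc (j+1) n := image_eq_self v hvin
  have hvj : ∀ i ∈ Finset.Icc 1 j, v i ∈ Finset.Icc 1 j := by
    intro i hi
    rw [Finset.mem_Icc] at hi
    have hiN : i ∈ Finset.Icc 1 n := Finset.mem_Icc.2 ⟨hi.1, le_trans hi.2 hjn⟩
    have h1 := apply_mem hvP hiN
    rw [Finset.mem_Icc] at h1
    rw [Finset.mem_Icc]
    refine ⟨h1.1, ?_⟩
    by_contra hgt
    push_neg at hgt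
    have hmem : v i ∈ Finset.Icc (j+1) n := Finset.mem_Icc.2 ⟨by omega, h1.2⟩
    rw [← hvim2] at hmem
    obtain ⟨i', hi', he⟩ := Finset.mem_image.1 hmem
    have := v.injective he
    rw [Finset.mem_Icc] at hi'
    omega
  have hjv : permIdx n v ≤ j := permIdx_le hj1 hjn (image_eq_self v hvj)
  refine ⟨hvP, i0, lt_of_le_of_lt hjv hi0, ?_⟩
  rw [hvgt i0 (by omega)]
  exact hne

open scoped Classical in
noncomputable def mu (n : ℕ) (w : Equiv.Perm ℕ) : ℕ :=
  if w = 1 then 0 else permIdx n w + 1 - w 1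

lemma mu_one {n : ℕ} : mu n (1 : Equiv.Perm ℕ) = 0 := by
  rw [mu, if_pos rfl]

lemma mu_ne_one {n : ℕ} {w : Equiv.Perm ℕ} (h : w ≠ 1) :
    mu n w = permIdx n w + 1 - w 1 := by
  rw [mu, if_neg h]

lemma step {n : ℕ} {w : Equiv.Perm ℕ} (hw : IsPermOn n w) (hU : w ∉ Unsortables n)
    (h1 : w ≠ 1) :
    ∃ w', IsPermOn n w' ∧ w' ∉ Unsortables n ∧ w' (w 1) = w 1 ∧
      (∀ i, w 1 < i → w' i = w i) ∧ mu n w' < mu n w := by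
  have hn : 1 ≤ n := one_le_n_of_ne_one hw h1
  obtain ⟨hj1, hjn, hjim⟩ := permIdx_spec hw hn
  set j := permIdx n w with hjdef
  obtain ⟨hk1, hkj⟩ := apply_one_le_permIdx hw hn
  set k := w 1 with hkdef
  have hfix : ∀ i, j < i → w i = i := fixed_of_not_unsortable hw hU
  have hmu : mu n w = j + 1 - k := mu_ne_one h1
  rcases eq_or_lt_of_le hkj with heq | hlt
  · -- k = j : take the identity
    refine ⟨1, fun i _ => rfl, one_not_unsortable, rfl, ?_, ?_⟩
    · intro i hi
      exact (hfix i (by omega)).symm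
    · rw [hmu, mu_one]
      omega
  · -- k < j
    have hex : ∃ p, 1 ≤ p ∧ p ≤ k ∧ k < w p := by
      by_contra h
      push_neg at h
      have him : (Finset.Icc 1 k).image ⇑w = Finset.Icc 1 k := by
        apply image_eq_self
        intro i hi
        rw [Finset.mem_Icc] at hi
        rw [Finset.mem_Icc]
        exact ⟨one_le_apply hw hi.1, h i hi.1 hi.2⟩
      have := permIdx_le hk1 (le_trans (le_of_lt hlt) hjn) him
      omega
    obtain ⟨p, hp1, hpk, hpw⟩ := hex
    have hpne1 : p ≠ 1 := by
      intro h
      rw [h] at hpw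
      omega
    have hp2 : 2 ≤ p := by omega
    have hk2 : 2 ≤ k := by omega
    set c : Equiv.Perm ℕ := Equiv.swap 1 p * Equiv.swap p k with hcdef
    have hck : c k = 1 := by
      rw [hcdef, Equiv.Perm.mul_apply, Equiv.swap_apply_right, Equiv.swap_apply_right]
    have hc1 : c 1 = p := by
      have hin : (Equiv.swap p k) 1 = 1 :=
        Equiv.swap_apply_of_ne_of_ne (by omega) (by omega)
      rw [hcdef, Equiv.Perm.mul_apply, hin, Equiv.swap_apply_left]
    have hcother : ∀ x, x ≠ 1 → x ≠ p → x ≠ k → c x = x := by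
      intro x hx1 hxp hxk
      rw [hcdef, Equiv.Perm.mul_apply, Equiv.swap_apply_of_ne_of_ne hxp hxk,
        Equiv.swap_apply_of_ne_of_ne hx1 hxp]
    have hcmem : ∀ m, k ≤ m → ∀ x ∈ Finset.Icc 1 m, c x ∈ Finset.Icc 1 m := by
      intro m hm x hx
      rw [Finset.mem_Icc] at hx
      rcases eq_or_ne x 1 with rfl | hx1
      · rw [hc1, Finset.mem_Icc]; omega
      rcases eq_or_ne x k with rfl | hxk
      · rw [hck, Finset.mem_Icc]; omega
      rcases eq_or_ne x p with hxp' | hxp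
      · have hcp : c p = Equiv.swap 1 p k := by
          rw [hcdef, Equiv.Perm.mul_apply, Equiv.swap_apply_left]
        rw [hxp', hcp]
        rcases eq_or_ne k p with h' | h'
        · rw [h', Equiv.swap_apply_right, Finset.mem_Icc]; omega
        · rw [Equiv.swap_apply_of_ne_of_ne (by omega) h', Finset.mem_Icc]; omega
      · rw [hcother x hx1 hxp hxk, Finset.mem_Icc]; omega
    set w' : Equiv.Perm ℕ := w * c with hwdef
    have hw'app : ∀ x, w' x = w (c x) := fun x => rfl
    have hw'k : w' k = k := by rw [hw'app, hck]
    have hw'gt : ∀ i, k < i → w' i = w i := by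
      intro i hi
      rw [hw'app, hcother i (by omega) (by omega) (by omega)]
    have hw'1 : w' 1 = w p := by rw [hw'app, hc1]
    have hw'P : IsPermOn n w' := by
      intro i hi
      have hi' : ¬(1 ≤ i ∧ i ≤ n) := by rwa [Finset.mem_Icc] at hi
      have hkn : k ≤ n := le_trans hkj hjn
      rw [hw'app, hcother i (by omega) (by omega) (by omega)]
      exact hw i hi
    have him : ∀ m, k ≤ m → (Finset.Icc 1 m).image ⇑w' = (Finset.Icc 1 m).image ⇑w := by
      intro m hm
      have h1' : (Finset.Icc 1 m).image ⇑c = Finset.Icc 1 m := image_eq_self c (hcmem m hm)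
      have h2' : (Finset.Icc 1 m).image ⇑w' = ((Finset.Icc 1 m).image ⇑c).image ⇑w := by
        rw [Finset.image_image, hwdef, Equiv.Perm.coe_mul]
      rw [h2', h1']
    have hw'idx : permIdx n w' = j := by
      have hle : permIdx n w' ≤ j := by
        apply permIdx_le hj1 hjn
        rw [him j (le_of_lt hlt)]
        exact hjim
      have hge : j ≤ permIdx n w' := by
        apply le_csInf
        · exact ⟨j, hj1, hjn, by rw [him j (le_of_lt hlt)]; exact hjim⟩
        · rintro b ⟨hb1, hbn, hbim⟩
          by_contra hbj
          push_neg at hbj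
          rcases le_or_gt k b with hkb | hbk
          · have hbw : (Finset.Icc 1 b).image ⇑w = Finset.Icc 1 b := by
              rw [← him b hkb]
              exact hbim
            have := permIdx_le hb1 hbn hbw
            omega
          · have h1mem : w' 1 ∈ Finset.Icc 1 b := by
              rw [← hbim]
              exact Finset.mem_image_of_mem _ (Finset.mem_Icc.2 ⟨le_refl 1, hb1⟩)
            rw [hw'1, Finset.mem_Icc] at h1mem
            omega
      omega
    have hw'U : w' ∉ Unsortables n := by
      rintro ⟨-, i, hi, hne⟩
      rw [hw'idx] at hi
      apply hne
      rw [hw'gt i (by omega)]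
      exact hfix i hi
    have hw'ne : w' ≠ 1 := by
      intro h
      have h2 := hw'1
      rw [h] at h2
      have h3 : (1 : Equiv.Perm ℕ) 1 = 1 := rfl
      rw [h3] at h2
      omega
    refine ⟨w', hw'P, hw'U, hw'k, hw'gt, ?_⟩
    rw [hmu, mu_ne_one hw'ne, hw'idx, hw'1]
    exact Nat.sub_lt_sub_left (by omega) (by omega)

lemma chain {n : ℕ} : ∀ N : ℕ, ∀ w : Equiv.Perm ℕ, mu n w ≤ N → IsPermOn n w →
    w ∉ Unsortables n →
    ∃ m : ℕ, ∃ c : ℕ → Equiv.Perm ℕ, c 0 = w ∧ (∀ t, m ≤ t → c t = 1) ∧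
      (∀ t, IsPermOn n (c t)) ∧
      (∀ t, c (t+1) (c t 1) = c t 1 ∧ ∀ i, c t 1 < i → c (t+1) i = c t i) ∧
      (∀ t, t < m → mu n (c (t+1)) < mu n (c t)) := by
  intro N
  induction N with
  | zero =>
    intro w hmu hw hU
    have hw1 : w = 1 := by
      by_contra h
      have hn := one_le_n_of_ne_one hw h
      obtain ⟨ha, hb⟩ := apply_one_le_permIdx hw hn
      have hmu' := mu_ne_one (n := n) h
      omega
    subst hw1
    exact ⟨0, fun _ => 1, rfl, fun _ _ => rfl, fun _ i _ => rfl,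
      fun t => ⟨rfl, fun i _ => rfl⟩, fun t ht => absurd ht (Nat.not_lt_zero t)⟩
  | succ N ih =>
    intro w hmu hw hU
    rcases eq_or_ne w 1 with rfl | h1
    · exact ⟨0, fun _ => 1, rfl, fun _ _ => rfl, fun _ i _ => rfl,
        fun t => ⟨rfl, fun i _ => rfl⟩, fun t ht => absurd ht (Nat.not_lt_zero t)⟩
    · obtain ⟨w', hw'P, hw'U, hcomp1, hcomp2, hlt⟩ := step hw hU h1
      obtain ⟨m', c', hc0, hcend, hcP, hccomp, hcdec⟩ := ih w' (by omega) hw'P hw'U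
      refine ⟨m' + 1, fun t => match t with | 0 => w | (s+1) => c' s, rfl, ?_, ?_, ?_, ?_⟩
      · intro t ht
        match t with
        | (s+1) => exact hcend s (by omega)
      · intro t
        match t with
        | 0 => exact hw
        | (s+1) => exact hcP s
      · intro t
        match t with
        | 0 =>
          refine ⟨?_, ?_⟩
          · show c' 0 (w 1) = w 1
            rw [hc0]
            exact hcomp1
          · intro i hi
            show c' 0 i = w i
            rw [hc0]
            exact hcomp2 i hi
        | (s+1) => exact hccomp s
      · intro t ht
        match t with
        | 0 =>
          show mu n (c' 0) < mu n w
          rw [hc0]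
          exact hlt
        | (s+1) => exact hcdec s (by omega)

lemma sortable {n : ℕ} {w : Equiv.Perm ℕ} (hw : IsPermOn n w) (hU : w ∉ Unsortables n) :
    ∃ f : Equiv.Perm ℕ → Equiv.Perm ℕ, IsHomingShuffle n f ∧ ∃ m : ℕ, f^[m] w = 1 := by
  classical
  obtain ⟨m, c, hc0, hcend, hcP, hccomp, hcdec⟩ := chain (n := n) (mu n w) w le_rfl hw hU
  set g : Equiv.Perm ℕ → Equiv.Perm ℕ := fun v => v * Equiv.swap 1 (v 1) with hgdef
  have hg : ∀ v, IsPermOn n v →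
      IsPermOn n (g v) ∧ g v (v 1) = v 1 ∧ ∀ i, v 1 < i → g v i = v i := by
    intro v hv
    have hk1 : 1 ≤ v 1 := one_le_apply hv le_rfl
    have hmul : ∀ x, g v x = v (Equiv.swap 1 (v 1) x) := fun x => rfl
    refine ⟨?_, ?_, ?_⟩
    · intro i hi
      rcases eq_or_ne i 1 with rfl | hi1
      · have hn0 : n = 0 := by
          rw [Finset.mem_Icc] at hi
          omega
        have hid : ∀ x, v x = x := fun x => hv x (by rw [Finset.mem_Icc]; omega)
        rw [hmul, hid 1, Equiv.swap_self]
        exact hid 1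
      rcases eq_or_ne i (v 1) with heq | hine
      · exfalso
        rcases Nat.eq_zero_or_pos n with hn0 | hn
        · have hid : ∀ x, v x = x := fun x => hv x (by rw [Finset.mem_Icc]; omega)
          exact hi1 (heq.trans (hid 1))
        · have := apply_mem hv (Finset.mem_Icc.2 ⟨le_rfl, hn⟩)
          rw [← heq] at this
          exact hi this
      · rw [hmul, Equiv.swap_apply_of_ne_of_ne hi1 hine]
        exact hv i hi
    · rw [hmul, Equiv.swap_apply_right]
    · intro i hi
      rw [hmul, Equiv.swap_apply_of_ne_of_ne (by omega) (by omega)]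
  set f : Equiv.Perm ℕ → Equiv.Perm ℕ :=
    fun v => if h : ∃ t, c t = v then c (Nat.find h + 1) else g v with hfdef
  have hmono : ∀ t, t ≤ m → ∀ s, s < t → mu n (c t) < mu n (c s) := by
    intro t
    induction t with
    | zero =>
      intro _ s hs
      omega
    | succ t iht =>
      intro htm s hs
      have h1 : mu n (c (t+1)) < mu n (c t) := hcdec t (by omega)
      rcases Nat.lt_or_ge s t with h | h
      · exact lt_trans h1 (iht (by omega) s h)
      · have hst : s = t := by omega
        subst hst
        exact h1
  have hne1 : ∀ s, s < m → c s ≠ 1 := by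
    intro s hs h
    have hmm := hmono m le_rfl s hs
    rw [hcend m le_rfl, h] at hmm
    exact lt_irrefl _ hmm
  have hkey : ∀ t, f (c t) = c (t + 1) := by
    intro t
    have hex : ∃ t', c t' = c t := ⟨t, rfl⟩
    have hf1 : f (c t) = c (Nat.find hex + 1) := dif_pos hex
    have hfind : c (Nat.find hex) = c t := Nat.find_spec hex
    have hfle : Nat.find hex ≤ t := Nat.find_le rfl
    rcases eq_or_ne (c t) 1 with hone | hone
    · have htm : m ≤ t := by
        by_contra h
        exact hne1 t (by omega) hone
      have ht0 : m ≤ Nat.find hex := by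
        by_contra h
        exact hne1 _ (by omega) (hfind.trans hone)
      rw [hf1, hcend _ (by omega), hcend _ (by omega)]
    · have htm : t < m := by
        by_contra h
        exact hone (hcend t (by omega))
      have ht0 : Nat.find hex = t := by
        by_contra h
        have hlt' : Nat.find hex < t := by omega
        have hmm := hmono t (by omega) _ hlt'
        rw [hfind] at hmm
        exact lt_irrefl _ hmm
      rw [hf1, ht0]
  refine ⟨f, ?_, m, ?_⟩
  · intro v hv
    by_cases h : ∃ t, c t = v
    · have hf1 : f v = c (Nat.find h + 1) := dif_pos h
      have hfind : c (Nat.find h) = v := Nat.find_spec h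
      obtain ⟨h1, h2⟩ := hccomp (Nat.find h)
      rw [hfind] at h1 h2
      refine ⟨?_, ?_, ?_⟩
      · rw [hf1]; exact hcP _
      · rw [hf1]; exact h1
      · intro i hi
        rw [hf1]
        exact h2 i hi
    · have hf1 : f v = g v := dif_neg h
      obtain ⟨ha, hb, hc'⟩ := hg v hv
      refine ⟨?_, ?_, ?_⟩
      · rw [hf1]; exact ha
      · rw [hf1]; exact hb
      · intro i hi
        rw [hf1]
        exact hc' i hi
  · have hiter : ∀ s, f^[s] w = c s := by
      intro s
      induction s with
      | zero => exact hc0.symm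
      | succ s ihs => rw [Function.iterate_succ_apply', ihs, hkey]
    rw [hiter m, hcend m le_rfl]

end HS

/-- There is no homing shuffle sorting `w` if and only if `w ∈ U_n`;
equivalently, some homing shuffle sorts `w` if and only if `w ∉ U_n`. -/
theorem stmt_15 (n : ℕ) (w : Equiv.Perm ℕ) (hw : IsPermOn n w) :
    ((∀ f : Equiv.Perm ℕ → Equiv.Perm ℕ, IsHomingShuffle n f →
        ∀ m : ℕ, f^[m] w ≠ 1) ↔ w ∈ Unsortables n) ∧
    ((∃ f : Equiv.Perm ℕ → Equiv.Perm ℕ, IsHomingShuffle n f ∧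
        ∃ m : ℕ, f^[m] w = 1) ↔ w ∉ Unsortables n) := by
  have hAll : w ∈ Unsortables n → ∀ f, IsHomingShuffle n f → ∀ m : ℕ, f^[m] w ∈ Unsortables n := by
    intro hU f hf m
    induction m with
    | zero => exact hU
    | succ m ih =>
      rw [Function.iterate_succ_apply']
      exact HS.unsortable_step hf ih
  constructor
  · constructor
    · intro hA
      by_contra hU
      obtain ⟨f, hf, m, hm⟩ := HS.sortable hw hU
      exact hA f hf m hm
    · intro hU f hf m h
      have := hAll hU f hf m
      rw [h] at this
      exact HS.one_not_unsortable this
  · constructor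
    · rintro ⟨f, hf, m, hm⟩ hU
      have := hAll hU f hf m
      rw [hm] at this
      exact HS.one_not_unsortable this
    · intro hU
      exact HS.sortable hw hU
end

section
/- Let M be a max shuffle on S_n, let w ∈ S_n, and set k := w(1). If w(1) ≥ M(w)(1), then M^{k-1}(w)(1) = 1; that is, if M does not increase the front card of w, then M terminates on w after at most k - 1 further iterations. -/
lemma image_stable (f : Equiv.Perm ℕ) (S : Finset ℕ) (h : ∀ i ∈ S, f i ∈ S) :
    S.image f = S :=
  Finset.eq_of_subset_of_card_le
    (fun x hx => by
      obtain ⟨y, hy, rfl⟩ := Finset.mem_image.mp hx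
      exact h y hy)
    (by rw [Finset.card_image_of_injective _ f.injective])

lemma mem_of_apply_mem (f : Equiv.Perm ℕ) (S : Finset ℕ) (h : ∀ i ∈ S, f i ∈ S)
    {x : ℕ} (hx : f x ∈ S) : x ∈ S := by
  rw [← image_stable f S h] at hx
  obtain ⟨y, hy, hyx⟩ := Finset.mem_image.mp hx
  rwa [← f.injective hyx]

lemma max_step {n : ℕ} {M : Equiv.Perm ℕ → Equiv.Perm ℕ} (hM : IsMaxShuffle n M)
    {u : Equiv.Perm ℕ} {j : ℕ} (hu : IsPermOn n u) (h2 : 2 ≤ j) (hjn : j ≤ n)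
    (hu1 : u 1 = j) (hinv : ∀ i ∈ Finset.Icc 1 j, u i ≤ j) :
    IsPermOn n (M u) ∧ M u 1 = j - 1 ∧
      ∀ i ∈ Finset.Icc 1 (j - 1), M u i ≤ j - 1 := by
  have hstab : ∀ i ∈ Finset.Icc 1 j, u i ∈ Finset.Icc 1 j := by
    intro i hi
    have hi' : i ∈ Finset.Icc 1 n := by
      rw [Finset.mem_Icc] at hi ⊢; omega
    have := Finset.mem_Icc.mp (permOn_mem hu hi')
    exact Finset.mem_Icc.mpr ⟨this.1, hinv i hi⟩
  have hne : u 1 ≠ 1 := by omega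
  obtain ⟨hMp, hMfix, hMgt⟩ := hM.1 u hu
  have hmax := hM.2 u hu hne
  rw [hu1] at hmax hMfix hMgt
  -- compute the max
  have hmem : j - 1 ∈ (Finset.Icc 2 j).image u := by
    have h1 : j - 1 ∈ Finset.Icc 1 j := by rw [Finset.mem_Icc]; omega
    rw [← image_stable u (Finset.Icc 1 j) hstab] at h1
    obtain ⟨i, hi, hui⟩ := Finset.mem_image.mp h1
    have hi1 : i ≠ 1 := by
      rintro rfl; rw [hu1] at hui; omega
    refine Finset.mem_image.mpr ⟨i, ?_, hui⟩
    rw [Finset.mem_Icc] at hi ⊢; omega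
  have hle : ∀ x ∈ (Finset.Icc 2 j).image u, x ≤ j - 1 := by
    intro x hx
    obtain ⟨i, hi, rfl⟩ := Finset.mem_image.mp hx
    rw [Finset.mem_Icc] at hi
    have h1 : u i ≤ j := hinv i (Finset.mem_Icc.mpr ⟨by omega, hi.2⟩)
    have h2 : u i ≠ j := by
      intro h
      have : i = 1 := u.injective (by rw [h, hu1])
      omega
    omega
  have hmaxval : ((Finset.Icc 2 j).image u).max = ((j - 1 : ℕ) : WithBot ℕ) :=
    le_antisymm (Finset.max_le fun x hx => WithBot.coe_le_coe.mpr (hle x hx))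
      (Finset.le_max hmem)
  rw [hmaxval] at hmax
  have hMu1 : M u 1 = j - 1 := by exact_mod_cast hmax.symm
  refine ⟨hMp, hMu1, ?_⟩
  -- M u stabilizes [j, n]
  have hstab2 : ∀ i ∈ Finset.Icc j n, M u i ∈ Finset.Icc j n := by
    intro i hi
    rw [Finset.mem_Icc] at hi
    rcases eq_or_lt_of_le hi.1 with rfl | hlt
    · rw [hMfix]; exact Finset.mem_Icc.mpr ⟨le_refl _, hi.2⟩
    · rw [hMgt i hlt]
      have hui : u i ∈ Finset.Icc 1 n :=
        permOn_mem hu (Finset.mem_Icc.mpr ⟨by omega, hi.2⟩)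
      have hnot : u i ∉ Finset.Icc 1 j := by
        intro h
        have := mem_of_apply_mem u (Finset.Icc 1 j) hstab h
        rw [Finset.mem_Icc] at this; omega
      rw [Finset.mem_Icc] at hui hnot ⊢
      omega
  intro i hi
  rw [Finset.mem_Icc] at hi
  have hMi : M u i ∈ Finset.Icc 1 n :=
    permOn_mem hMp (Finset.mem_Icc.mpr ⟨hi.1, by omega⟩)
  have hnot : M u i ∉ Finset.Icc j n := by
    intro h
    have := mem_of_apply_mem (M u) (Finset.Icc j n) hstab2 h
    rw [Finset.mem_Icc] at this; omega
  rw [Finset.mem_Icc] at hMi hnot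
  omega

lemma max_iter {n : ℕ} {M : Equiv.Perm ℕ → Equiv.Perm ℕ} (hM : IsMaxShuffle n M) :
    ∀ m : ℕ, ∀ u : Equiv.Perm ℕ, IsPermOn n u → u 1 = m + 1 → m + 1 ≤ n →
      (∀ i ∈ Finset.Icc 1 (m + 1), u i ≤ m + 1) → (M^[m] u) 1 = 1 := by
  intro m
  induction m with
  | zero => intro u _ h1 _ _; simpa using h1
  | succ m ih =>
    intro u hu h1 hn hinv
    obtain ⟨h1', h2', h3'⟩ := max_step hM hu (by omega) hn h1 hinv
    rw [Function.iterate_succ_apply]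
    have he : m + 1 + 1 - 1 = m + 1 := by omega
    rw [he] at h2' h3'
    exact ih (M u) h1' h2' (by omega) h3'

theorem stmt_18 (n : ℕ) (M : Equiv.Perm ℕ → Equiv.Perm ℕ)
    (hM : IsMaxShuffle n M) (w : Equiv.Perm ℕ) (hw : IsPermOn n w)
    (k : ℕ) (hk : k = w 1) (hdec : M w 1 ≤ w 1) :
    (M^[k - 1] w) 1 = 1 := by
  subst hk
  rcases eq_or_ne (w 1) 1 with h1 | h1
  · simp [h1]
  · have hn1 : 1 ∈ Finset.Icc 1 n := by
      by_contra h; exact h1 (hw 1 h)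
    have hk1 := Finset.mem_Icc.mp (permOn_mem hw hn1)
    have hk2 : 2 ≤ w 1 := by
      rcases Nat.lt_or_ge (w 1) 2 with h | h
      · interval_cases h' : (w 1) <;> omega
      · exact h
    have hmax := hM.2 w hw h1
    have hinv : ∀ i ∈ Finset.Icc 1 (w 1), w i ≤ w 1 := by
      intro i hi
      rcases eq_or_ne i 1 with rfl | hi1
      · exact le_refl _
      · rw [Finset.mem_Icc] at hi
        have hmem : w i ∈ (Finset.Icc 2 (w 1)).image w :=
          Finset.mem_image_of_mem w (Finset.mem_Icc.mpr ⟨by omega, hi.2⟩)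
        have hle := Finset.le_max hmem
        rw [hmax] at hle
        have : w i ≤ M w 1 := WithBot.coe_le_coe.mp hle
        omega
    have he : w 1 - 1 + 1 = w 1 := by omega
    have := max_iter hM (w 1 - 1) w hw (by omega) (by omega) (by rw [he]; exact hinv)
    exact this
end
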